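/- arXiv:math/0007035 — 7 statements merged into one kernel-verified Lean document; each statement's English description precedes it below -/
import Mathlib

section
/- Let R = {[[f(x), g(x)],[0, f(x²)]] : f, g ∈ k[x]} ⊆ M₂(k[x]) and let N be the ideal of strictly upper triangular matrices in R. Then N is a free left R/N-module of rank 1, but a free right R/N-module of rank 2, with basis given (for instance) by the matrix units e₁₂ and x·e₁₂. -/
/-!
The class of `f` acts on `g·e₁₂` by `g ↦ f g` on the left and `g ↦ f(x²) g` on the right.
So `N` is `k[x]` over itself on the left, and `k[x]` over `k[x²]` on the right, which is free
on `1, x`: split a polynomial into its even and odd parts.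
-/

open Polynomial

namespace Polynomial

variable {R : Type*} [CommSemiring R]

theorem coeff_expand_two_add_X_mul_expand_two_even (a b : R[X]) (n : ℕ) :
    (expand R 2 a + X * expand R 2 b).coeff (2 * n) = a.coeff n := by
  rcases n with _ | n
  · simp [coeff_expand]
  · rw [coeff_add, coeff_expand_mul' two_pos, show 2 * (n + 1) = (2 * n + 1) + 1 by ring,
      coeff_X_mul, coeff_expand two_pos, if_neg (by omega), add_zero]

theorem coeff_expand_two_add_X_mul_expand_two_odd (a b : R[X]) (n : ℕ) :
    (expand R 2 a + X * expand R 2 b).coeff (2 * n + 1) = b.coeff n := by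
  rw [coeff_add, coeff_X_mul, coeff_expand_mul' two_pos, coeff_expand two_pos, if_neg (by omega),
    zero_add]

theorem bijective_expand_two_add_X_mul_expand_two :
    Function.Bijective fun p : R[X] × R[X] => expand R 2 p.1 + X * expand R 2 p.2 := by
  refine ⟨fun p q h => ?_, fun g => ⟨(contract 2 g, contract 2 g.divX), ?_⟩⟩
  · have h_even n := coeff_expand_two_add_X_mul_expand_two_even p.1 p.2 n
    have h_odd n := coeff_expand_two_add_X_mul_expand_two_odd p.1 p.2 n
    simp only [h, coeff_expand_two_add_X_mul_expand_two_even,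
      coeff_expand_two_add_X_mul_expand_two_odd] at h_even h_odd
    exact Prod.ext (ext fun n => (h_even n).symm) (ext fun n => (h_odd n).symm)
  · ext m
    obtain ⟨n, rfl | rfl⟩ := Nat.even_or_odd' m
    · rw [coeff_expand_two_add_X_mul_expand_two_even, coeff_contract two_ne_zero, mul_comm]
    · rw [coeff_expand_two_add_X_mul_expand_two_odd, coeff_contract two_ne_zero, coeff_divX,
        mul_comm]

end Polynomial

namespace Matrix

variable {R : Type*} [Semiring R]

theorem diagonal_fin_two_mul_single_zero_one (a b : R) :
    !![a, 0; 0, b] * !![0, 1; 0, 0] = !![0, a; 0, 0] := by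
  rw [mul_fin_two]
  simp

theorem single_zero_one_mul_diagonal_fin_two (a b : R) :
    !![0, 1; 0, 0] * !![a, 0; 0, b] = !![0, b; 0, 0] := by
  rw [mul_fin_two]
  simp

theorem of_zero_one_zero_zero_inj {a b : R} :
    !![0, a; 0, 0] = !![0, b; 0, 0] ↔ a = b := by
  simp

end Matrix

/-- Let `R = {[[f(x), g(x)], [0, f(x²)]]} ⊆ M₂(k[x])` and let `N` be its ideal of strictly
upper triangular matrices.  `R/N ≅ k[x]`, where the class of `f` acts on `N` on the left
through the diagonal matrix `c f = diag(f(x), f(x²))`.  Then `N` is free of rank 1 as a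
left `R/N`-module, with basis `e₁₂`: every `n ∈ N` is uniquely of the form `c f * e₁₂`;
and `N` is free of rank 2 as a right `R/N`-module, with basis `e₁₂, x·e₁₂`: every `n ∈ N`
is uniquely of the form `e₁₂ * c f₁ + (x·e₁₂) * c f₂`. -/
theorem nilradical_free_ranks (k : Type*) [Field k] :
    let c : Polynomial k → Matrix (Fin 2) (Fin 2) (Polynomial k) :=
      fun f => !![f, 0; 0, f.comp (Polynomial.X ^ 2)]
    let e₁₂ : Matrix (Fin 2) (Fin 2) (Polynomial k) := !![0, 1; 0, 0]
    let Nset : Set (Matrix (Fin 2) (Fin 2) (Polynomial k)) :=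
      {M | ∃ g : Polynomial k, M = !![0, g; 0, 0]}
    (∀ n ∈ Nset, ∃! f : Polynomial k, n = c f * e₁₂) ∧
    (∀ n ∈ Nset, ∃! p : Polynomial k × Polynomial k,
      n = e₁₂ * c p.1 + (((Polynomial.X : Polynomial k)) • e₁₂) * c p.2) := by
  intro c e₁₂ Nset
  have left_action (f : k[X]) : c f * e₁₂ = !![0, f; 0, 0] :=
    Matrix.diagonal_fin_two_mul_single_zero_one _ _
  have right_action (p : k[X] × k[X]) :
      e₁₂ * c p.1 + ((X : k[X]) • e₁₂) * c p.2 =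
        !![0, expand k 2 p.1 + X * expand k 2 p.2; 0, 0] := by
    simp only [c, e₁₂, Matrix.smul_mul, Matrix.single_zero_one_mul_diagonal_fin_two,
      expand_eq_comp_X_pow]
    simp [Matrix.smul_of, Matrix.of_add_of]
  constructor
  · rintro _ ⟨g, rfl⟩
    simp only [left_action, Matrix.of_zero_one_zero_zero_inj]
    exact existsUnique_eq'
  · rintro _ ⟨g, rfl⟩
    simp only [right_action, Matrix.of_zero_one_zero_zero_inj, eq_comm (a := g)]
    exact bijective_expand_two_add_X_mul_expand_two.existsUnique g
end

section
/- The ring R = {[[f(x), g(x)],[0, f(x²)]] : f, g ∈ k[x]} is generated as a k-algebra by the two elements α = diag(x, x²) and β = e₁₂ (the strictly upper triangular matrix unit). -/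
open Polynomial

noncomputable section AuxGen

variable {k : Type*} [Field k]

private def genα (k : Type*) [Field k] : Matrix (Fin 2) (Fin 2) (Polynomial k) :=
  !![X, 0; 0, X ^ 2]

private lemma genα_pow (n : ℕ) :
    (genα k) ^ n = !![X ^ n, 0; 0, X ^ (2 * n)] := by
  induction n with
  | zero => simp [Matrix.one_fin_two]
  | succ n ih =>
      rw [pow_succ, ih]
      ext i j : 2
      fin_cases i <;> fin_cases j <;>
        simp [genα, Matrix.mul_apply, Fin.sum_univ_two, pow_succ, Nat.mul_succ, mul_assoc,
          pow_add]

private lemma aeval_genα (f : Polynomial k) :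
    aeval (genα k) f = !![f, 0; 0, f.comp (X ^ 2)] := by
  induction f using Polynomial.induction_on' with
  | add p q hp hq =>
      rw [map_add, hp, hq]
      ext i j : 2
      fin_cases i <;> fin_cases j <;> simp
  | monomial n a =>
      rw [aeval_monomial, genα_pow]
      ext i j : 2
      fin_cases i <;> fin_cases j <;>
        simp [Matrix.mul_apply, Fin.sum_univ_two, Matrix.algebraMap_matrix_apply,
          monomial_comp, ← pow_mul, Polynomial.C_mul_X_pow_eq_monomial,
          Nat.mul_comm]

private def genS (k : Type*) [Field k] :
    Subalgebra k (Matrix (Fin 2) (Fin 2) (Polynomial k)) where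
  carrier := {M | ∃ f g : Polynomial k, M = !![f, g; 0, f.comp (X ^ 2)]}
  add_mem' := by
    rintro a b ⟨f₁, g₁, rfl⟩ ⟨f₂, g₂, rfl⟩
    refine ⟨f₁ + f₂, g₁ + g₂, ?_⟩
    ext i j : 2
    fin_cases i <;> fin_cases j <;> simp [add_comp]
  mul_mem' := by
    rintro a b ⟨f₁, g₁, rfl⟩ ⟨f₂, g₂, rfl⟩
    refine ⟨f₁ * f₂, f₁ * g₂ + g₁ * f₂.comp (X ^ 2), ?_⟩
    ext i j : 2
    fin_cases i <;> fin_cases j <;>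
      simp [Matrix.mul_apply, Fin.sum_univ_two, mul_comp]
  algebraMap_mem' := by
    intro c
    refine ⟨C c, 0, ?_⟩
    ext i j : 2
    fin_cases i <;> fin_cases j <;>
      simp [Matrix.algebraMap_matrix_apply]

end AuxGen

/-- The ring `R = {[[f(x), g(x)], [0, f(x²)]] : f, g ∈ k[x]}` is generated as a
`k`-algebra by `α = diag(x, x²)` and `β = e₁₂`. -/
theorem ring_generated_by_alpha_beta (k : Type*) [Field k] :
    (Algebra.adjoin k
        ({!![Polynomial.X, 0; 0, Polynomial.X ^ 2], !![0, 1; 0, 0]} :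
          Set (Matrix (Fin 2) (Fin 2) (Polynomial k))) :
        Set (Matrix (Fin 2) (Fin 2) (Polynomial k))) =
      {M | ∃ f g : Polynomial k, M = !![f, g; 0, f.comp (Polynomial.X ^ 2)]} := by
  apply Set.Subset.antisymm
  · have h : Algebra.adjoin k
        ({!![X, 0; 0, X ^ 2], !![0, 1; 0, 0]} :
          Set (Matrix (Fin 2) (Fin 2) (Polynomial k))) ≤ genS k := by
      rw [Algebra.adjoin_le_iff]
      rintro M (rfl | rfl)
      · exact ⟨X, 0, by ext i j : 2; fin_cases i <;> fin_cases j <;> simp⟩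
      · exact ⟨0, 1, by ext i j : 2; fin_cases i <;> fin_cases j <;> simp⟩
    exact h
  · rintro M ⟨f, g, rfl⟩
    have hα : genα k ∈ Algebra.adjoin k
        ({!![X, 0; 0, X ^ 2], !![0, 1; 0, 0]} :
          Set (Matrix (Fin 2) (Fin 2) (Polynomial k))) :=
      Algebra.subset_adjoin (by left; rfl)
    have hβ : (!![0, 1; 0, 0] : Matrix (Fin 2) (Fin 2) (Polynomial k)) ∈
        Algebra.adjoin k
        ({!![X, 0; 0, X ^ 2], !![0, 1; 0, 0]} :
          Set (Matrix (Fin 2) (Fin 2) (Polynomial k))) :=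
      Algebra.subset_adjoin (by right; rfl)
    have hf : ∀ p : Polynomial k, aeval (genα k) p ∈ Algebra.adjoin k
        ({!![X, 0; 0, X ^ 2], !![0, 1; 0, 0]} :
          Set (Matrix (Fin 2) (Fin 2) (Polynomial k))) := by
      intro p
      have h1 : aeval (genα k) p ∈ Algebra.adjoin k {genα k} := by
        rw [Algebra.adjoin_singleton_eq_range_aeval]
        exact ⟨p, rfl⟩
      exact Algebra.adjoin_mono (Set.singleton_subset_iff.2 (by left; rfl)) h1
    have hM : aeval (genα k) f + aeval (genα k) g * !![0, 1; 0, 0] =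
        !![f, g; 0, f.comp (X ^ 2)] := by
      rw [aeval_genα, aeval_genα]
      ext i j : 2
      fin_cases i <;> fin_cases j <;>
        simp [Matrix.mul_apply, Fin.sum_univ_two]
    rw [← hM]
    exact add_mem (hf f) (mul_mem (hf g) hβ)
end

section
/- Let R = {[[f(x), g(x)],[0, f(x²)]] : f, g ∈ k[x]} and C ⊆ R the subring of diagonal matrices diag(f(x), f(x²)), which is isomorphic to k[x]. Then R is a free left C-module of rank 2 and a free right C-module of rank 3. -/
open Polynomial

lemma coeff_comp_X_sq {k : Type*} [CommRing k] (p : Polynomial k) (n : ℕ) :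
    (p.comp (X ^ 2)).coeff n = if 2 ∣ n then p.coeff (n / 2) else 0 := by
  induction p using Polynomial.induction_on' with
  | add p q hp hq => simp [add_comp, hp, hq]; split <;> simp
  | monomial e a =>
      rw [monomial_comp]
      rw [← pow_mul, ← Polynomial.C_mul_X_pow_eq_monomial, coeff_C_mul, coeff_X_pow,
        coeff_C_mul, coeff_X_pow]
      by_cases h : 2 ∣ n
      · obtain ⟨m, rfl⟩ := h
        have h2 : (2:ℕ) ∣ 2 * m := ⟨m, rfl⟩
        simp only [Nat.mul_div_cancel_left _ (by norm_num : 0 < 2), if_pos h2]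
        by_cases he : m = e <;> simp [he]
      · rw [if_neg h, if_neg (by rintro rfl; exact h ⟨e, rfl⟩), mul_zero]

lemma parity_coeff_even {k : Type*} [CommRing k] (a b : Polynomial k) (n : ℕ) :
    (a.comp (X ^ 2) + X * b.comp (X ^ 2)).coeff (2 * n) = a.coeff n := by
  rw [coeff_add, coeff_comp_X_sq, if_pos ⟨n, rfl⟩, Nat.mul_div_cancel_left _ two_pos]
  rcases Nat.eq_zero_or_pos n with rfl | hn
  · simp [coeff_X_mul]
  · have : 2 * n = (2 * n - 1) + 1 := by omega
    rw [this, coeff_X_mul, coeff_comp_X_sq, if_neg (by omega), add_zero]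

lemma parity_coeff_odd {k : Type*} [CommRing k] (a b : Polynomial k) (n : ℕ) :
    (a.comp (X ^ 2) + X * b.comp (X ^ 2)).coeff (2 * n + 1) = b.coeff n := by
  rw [coeff_add, coeff_comp_X_sq, if_neg (by omega), coeff_X_mul, coeff_comp_X_sq,
    if_pos ⟨n, rfl⟩, Nat.mul_div_cancel_left _ two_pos, zero_add]

lemma parity_exists {k : Type*} [CommRing k] (g : Polynomial k) :
    ∃ a b : Polynomial k, g = a.comp (X ^ 2) + X * b.comp (X ^ 2) := by
  refine ⟨∑ i ∈ Finset.range (g.natDegree + 1), monomial i (g.coeff (2 * i)),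
    ∑ i ∈ Finset.range (g.natDegree + 1), monomial i (g.coeff (2 * i + 1)), ?_⟩
  have ha : ∀ n, (∑ i ∈ Finset.range (g.natDegree + 1), monomial i (g.coeff (2 * i))).coeff n
      = g.coeff (2 * n) := by
    intro n
    rw [finset_sum_coeff]
    simp only [coeff_monomial]
    rw [Finset.sum_ite_eq' _ n]
    split
    · rfl
    · rename_i h
      rw [coeff_eq_zero_of_natDegree_lt (by simp at h; omega)]
  have hb : ∀ n, (∑ i ∈ Finset.range (g.natDegree + 1), monomial i (g.coeff (2 * i + 1))).coeff n
      = g.coeff (2 * n + 1) := by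
    intro n
    rw [finset_sum_coeff]
    simp only [coeff_monomial]
    rw [Finset.sum_ite_eq' _ n]
    split
    · rfl
    · rename_i h
      rw [coeff_eq_zero_of_natDegree_lt (by simp at h; omega)]
  ext m
  rcases Nat.even_or_odd m with ⟨n, rfl⟩ | ⟨n, rfl⟩
  · rw [show n + n = 2 * n by ring, parity_coeff_even, ha]
  · rw [parity_coeff_odd, hb]

lemma parity_unique {k : Type*} [CommRing k] {a b a' b' : Polynomial k}
    (h : a.comp (X ^ 2) + X * b.comp (X ^ 2) = a'.comp (X ^ 2) + X * b'.comp (X ^ 2)) :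
    a = a' ∧ b = b' := by
  constructor
  · ext n
    rw [← parity_coeff_even a b n, h, parity_coeff_even]
  · ext n
    rw [← parity_coeff_odd a b n, h, parity_coeff_odd]

/-- Let `R = {[[f(x), g(x)], [0, f(x²)]]} ⊆ M₂(k[x])` and let `C ⊆ R` be the subring of
diagonal matrices `c f = diag(f(x), f(x²))`, which is isomorphic to `k[x]` (the map
`f ↦ c f` is an injective ring homomorphism).  Then `R` is a free left `C`-module of
rank 2, with basis `1, e₁₂`, and a free right `C`-module of rank 3, with basis
`1, e₁₂, x·e₁₂`. -/
theorem free_over_diagonal_subring (k : Type*) [Field k] :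
    let c : Polynomial k → Matrix (Fin 2) (Fin 2) (Polynomial k) :=
      fun f => !![f, 0; 0, f.comp (Polynomial.X ^ 2)]
    let e₁₂ : Matrix (Fin 2) (Fin 2) (Polynomial k) := !![0, 1; 0, 0]
    let Rset : Set (Matrix (Fin 2) (Fin 2) (Polynomial k)) :=
      {M | ∃ f g : Polynomial k, M = !![f, g; 0, f.comp (Polynomial.X ^ 2)]}
    Function.Injective c ∧ c 1 = 1 ∧
    (∀ f g : Polynomial k, c (f + g) = c f + c g) ∧
    (∀ f g : Polynomial k, c (f * g) = c f * c g) ∧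
    (∀ r ∈ Rset, ∃! p : Polynomial k × Polynomial k, r = c p.1 + c p.2 * e₁₂) ∧
    (∀ r ∈ Rset, ∃! q : Polynomial k × Polynomial k × Polynomial k,
      r = c q.1 + e₁₂ * c q.2.1 + (((Polynomial.X : Polynomial k)) • e₁₂) * c q.2.2) := by
  intro c e₁₂ Rset
  have hentry : ∀ f g : Polynomial k,
      c f + c g * e₁₂ = !![f, g; 0, f.comp (X ^ 2)] := by
    intro f g
    simp only [c, e₁₂]
    ext i j
    fin_cases i <;> fin_cases j <;>
      simp [Matrix.mul_apply, Fin.sum_univ_two, Matrix.add_apply]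
  have hentry2 : ∀ f a b : Polynomial k,
      c f + e₁₂ * c a + ((X : Polynomial k) • e₁₂) * c b
        = !![f, a.comp (X ^ 2) + X * b.comp (X ^ 2); 0, f.comp (X ^ 2)] := by
    intro f a b
    simp only [c, e₁₂]
    ext i j
    fin_cases i <;> fin_cases j <;>
      simp [Matrix.mul_apply, Fin.sum_univ_two, Matrix.add_apply, Matrix.smul_apply]
  refine ⟨?_, ?_, ?_, ?_, ?_, ?_⟩
  · intro f g h
    simpa [c] using congrFun (congrFun h 0) 0
  · simp only [c, one_comp]
    ext i j
    fin_cases i <;> fin_cases j <;> simp [Matrix.one_apply]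
  · intro f g
    simp only [c, add_comp]
    ext i j
    fin_cases i <;> fin_cases j <;> simp
  · intro f g
    simp only [c, mul_comp]
    ext i j
    fin_cases i <;> fin_cases j <;> simp [Matrix.mul_apply, Fin.sum_univ_two]
  · rintro r ⟨f, g, rfl⟩
    refine ⟨(f, g), (hentry f g).symm, ?_⟩
    rintro ⟨p1, p2⟩ hp
    rw [hentry p1 p2] at hp
    have h00 := congrFun (congrFun hp 0) 0
    have h01 := congrFun (congrFun hp 0) 1
    simp at h00 h01
    simp [h00, h01]
  · rintro r ⟨f, g, rfl⟩
    obtain ⟨a, b, hab⟩ := parity_exists (k := k) g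
    refine ⟨(f, a, b), ?_, ?_⟩
    · show _ = c f + e₁₂ * c a + ((X : Polynomial k) • e₁₂) * c b
      rw [hentry2 f a b, ← hab]
    · rintro ⟨q1, q2, q3⟩ hq
      have hq : !![f, g; 0, f.comp (X ^ 2)]
          = c q1 + e₁₂ * c q2 + ((X : Polynomial k) • e₁₂) * c q3 := hq
      rw [hentry2 q1 q2 q3] at hq
      have h00 := congrFun (congrFun hq 0) 0
      have h01 := congrFun (congrFun hq 0) 1
      simp at h00 h01
      rw [hab] at h01
      obtain ⟨h2, h3⟩ := parity_unique h01.symm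
      simp [h00, h2, h3]
end

section
/- The ring S = {[[f(x), g(x)],[0, f(x²)]] : f, g ∈ k[x]} + y·M₂(k[x,y]) is a prime ring. -/
open Polynomial

private lemma zero_fin_two {R : Type*} [CommRing R] :
    (!![0,0;0,0] : Matrix (Fin 2) (Fin 2) R) = 0 := by
  ext i j; fin_cases i <;> fin_cases j <;> rfl

private lemma entry_mul_std {R : Type*} [CommRing R] (a b : Matrix (Fin 2) (Fin 2) R)
    (p i j q : Fin 2) :
    (a * Matrix.single i j (1:R) * b) p q = a p i * b j q := by
  rw [Matrix.mul_assoc]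
  simp [Matrix.mul_apply, Matrix.single, Finset.sum_ite_eq, ite_and]

private def Sring (k : Type*) [Field k] :
    Subring (Matrix (Fin 2) (Fin 2) (MvPolynomial (Fin 2) k)) where
  carrier := {M | ∃ f g : Polynomial k, ∃ Y : Matrix (Fin 2) (Fin 2) (MvPolynomial (Fin 2) k),
      M = !![Polynomial.aeval (MvPolynomial.X 0) f, Polynomial.aeval (MvPolynomial.X 0) g; 0,
        Polynomial.aeval (MvPolynomial.X 0) (f.comp (Polynomial.X ^ 2))]
        + (MvPolynomial.X 1 : MvPolynomial (Fin 2) k) • Y}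
  zero_mem' := ⟨0, 0, 0, by ext i j; fin_cases i <;> fin_cases j <;> simp⟩
  one_mem' := ⟨1, 0, 0, by ext i j; fin_cases i <;> fin_cases j <;> simp⟩
  add_mem' := by
    rintro A B ⟨f, g, Y, rfl⟩ ⟨f', g', Y', rfl⟩
    refine ⟨f + f', g + g', Y + Y', ?_⟩
    ext i j; fin_cases i <;> fin_cases j <;>
      simp [add_comp, Matrix.smul_apply, smul_eq_mul] <;> ring
  neg_mem' := by
    rintro A ⟨f, g, Y, rfl⟩
    refine ⟨-f, -g, -Y, ?_⟩
    ext i j; fin_cases i <;> fin_cases j <;>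
      simp [neg_comp, Matrix.smul_apply, smul_eq_mul] <;> ring
  mul_mem' := by
    rintro A B ⟨f, g, Y, rfl⟩ ⟨f', g', Y', rfl⟩
    refine ⟨f * f', f * g' + g * (f'.comp (X^2)),
      !![Polynomial.aeval (MvPolynomial.X 0) f, Polynomial.aeval (MvPolynomial.X 0) g; 0,
        Polynomial.aeval (MvPolynomial.X 0) (f.comp (X^2))] * Y'
        + Y * !![Polynomial.aeval (MvPolynomial.X 0) f', Polynomial.aeval (MvPolynomial.X 0) g'; 0,
          Polynomial.aeval (MvPolynomial.X 0) (f'.comp (X^2))]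
        + (MvPolynomial.X 1 : MvPolynomial (Fin 2) k) • (Y * Y'), ?_⟩
    have hA : (!![Polynomial.aeval (MvPolynomial.X 0) f, Polynomial.aeval (MvPolynomial.X 0) g; 0,
        Polynomial.aeval (MvPolynomial.X 0) (f.comp (X^2))] : Matrix (Fin 2) (Fin 2) (MvPolynomial (Fin 2) k))
        * !![Polynomial.aeval (MvPolynomial.X 0) f', Polynomial.aeval (MvPolynomial.X 0) g'; 0,
          Polynomial.aeval (MvPolynomial.X 0) (f'.comp (X^2))]
        = !![Polynomial.aeval (MvPolynomial.X 0) (f * f'),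
            Polynomial.aeval (MvPolynomial.X 0) (f * g' + g * (f'.comp (X^2))); 0,
            Polynomial.aeval (MvPolynomial.X 0) ((f * f').comp (X^2))] := by
      rw [Matrix.mul_fin_two]
      ext i j; fin_cases i <;> fin_cases j <;> simp [map_add, map_mul, mul_comp]
    rw [← hA, add_mul, mul_add, mul_add, Matrix.mul_smul, Matrix.smul_mul, Matrix.smul_mul,
      Matrix.mul_smul, smul_smul, smul_add, smul_add, smul_smul]
    abel
/-- The ring `S = {[[f(x), g(x)], [0, f(x²)]] : f, g ∈ k[x]} + y·M₂(k[x,y])` is a prime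
ring: if `a, b ∈ S` satisfy `a·S·b = 0` then `a = 0` or `b = 0` (for rings, this is
equivalent to primeness in terms of products of ideals). -/
theorem S_is_prime (k : Type*) [Field k] :
    let Q := MvPolynomial (Fin 2) k
    let ι : Polynomial k → Q := fun f => Polynomial.aeval (MvPolynomial.X 0 : Q) f
    let Sset : Set (Matrix (Fin 2) (Fin 2) Q) :=
      {M | ∃ f g : Polynomial k, ∃ Y : Matrix (Fin 2) (Fin 2) Q,
        M = !![ι f, ι g; 0, ι (f.comp (Polynomial.X ^ 2))] + (MvPolynomial.X 1 : Q) • Y}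
    ∃ Ssub : Subring (Matrix (Fin 2) (Fin 2) Q),
      (Ssub : Set (Matrix (Fin 2) (Fin 2) Q)) = Sset ∧
      ∀ a b : Ssub, (∀ r : Ssub, a * r * b = 0) → a = 0 ∨ b = 0 := by
  intro Q ι Sset
  classical
  refine ⟨Sring k, rfl, ?_⟩
  rintro ⟨a, ha⟩ ⟨b, hb⟩ h
  by_cases hA : a = 0
  · exact Or.inl (Subtype.ext hA)
  right
  refine Subtype.ext ?_
  obtain ⟨p, i, hpi⟩ : ∃ p i, a p i ≠ 0 := by
    by_contra hc
    push_neg at hc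
    exact hA (Matrix.ext fun p i => hc p i)
  show b = 0
  refine Matrix.ext fun j q => ?_
  have hmem : (MvPolynomial.X 1 : Q) • Matrix.single i j (1:Q) ∈ Sring k := by
    refine ⟨0, 0, Matrix.single i j (1:Q), ?_⟩
    simp [zero_comp, zero_fin_two]
  have h0 := congrArg Subtype.val (h ⟨_, hmem⟩)
  have h1 : a * ((MvPolynomial.X 1 : Q) • Matrix.single i j (1:Q)) * b = 0 := h0
  rw [Matrix.mul_smul, Matrix.smul_mul] at h1
  have h2 := congrFun (congrFun h1 p) q
  simp only [Matrix.smul_apply, smul_eq_mul, Matrix.zero_apply] at h2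
  rw [entry_mul_std] at h2
  have hX : (MvPolynomial.X 1 : Q) ≠ 0 := MvPolynomial.X_ne_zero 1
  have h3 : a p i * b j q = 0 := by
    rcases mul_eq_zero.mp h2 with h' | h'
    · exact absurd h' hX
    · exact h'
  rcases mul_eq_zero.mp h3 with h' | h'
  · exact absurd h' hpi
  · simpa using h'
end

section
/- Let S = {[[f(x), g(x)],[0, f(x²)]] : f, g ∈ k[x]} + y·M₂(k[x,y]) and let C ⊆ S be the subring of diagonal matrices diag(f(x,y), f(x²,y)) for f ∈ k[x,y], so C ≅ k[x,y]. Then S is finitely generated as a left C-module and as a right C-module; consequently S is a left and right noetherian ring. -/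
open Polynomial

section MatHelp
variable {R : Type*} [CommRing R]
lemma add_ff (a b c d e f g h : R) :
    (!![a, b; c, d] + !![e, f; g, h]) = !![a + e, b + f; c + g, d + h] := by
  ext i j; fin_cases i <;> fin_cases j <;> simp
lemma smul_ff (r a b c d : R) : r • !![a, b; c, d] = !![r * a, r * b; r * c, r * d] := by
  ext i j; fin_cases i <;> fin_cases j <;> simp
omit [CommRing R] in
lemma ext_ff {a b c d a' b' c' d' : R} (h1 : a = a') (h2 : b = b') (h3 : c = c')
    (h4 : d = d') : (!![a, b; c, d] : Matrix (Fin 2) (Fin 2) R) = !![a', b'; c', d'] := by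
  subst h1 h2 h3 h4; rfl
end MatHelp

namespace SThmAux
variable (k : Type*) [Field k]
noncomputable abbrev QQ := MvPolynomial (Fin 2) k
noncomputable def xx : QQ k := MvPolynomial.X 0
noncomputable def yy : QQ k := MvPolynomial.X 1
noncomputable def iH : Polynomial k →ₐ[k] QQ k := Polynomial.aeval (xx k)
noncomputable def sH : QQ k →ₐ[k] QQ k :=
  MvPolynomial.aeval (fun i : Fin 2 => if i = 0 then xx k ^ 2 else yy k)

def Sset' : Set (Matrix (Fin 2) (Fin 2) (QQ k)) :=
  {M | ∃ f g : Polynomial k, ∃ Y : Matrix (Fin 2) (Fin 2) (QQ k),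
    M = !![iH k f, iH k g; 0, iH k (f.comp (Polynomial.X ^ 2))] + yy k • Y}

variable {k}
-- (decomp lemmas assumed; re-add)
lemma sH_x : sH k (xx k) = xx k ^ 2 := by simp [sH, xx]
lemma sH_y : sH k (yy k) = yy k := by simp [sH, yy]
lemma sH_i (f : Polynomial k) : sH k (iH k f) = iH k (f.comp (Polynomial.X ^ 2)) := by
  show sH k (Polynomial.aeval (xx k) f) = Polynomial.aeval (xx k) (f.comp (Polynomial.X ^ 2))
  rw [← Polynomial.aeval_algHom_apply (sH k) (xx k) f, sH_x, Polynomial.aeval_comp]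
  congr 1; simp
lemma decomp_y (q : QQ k) : ∃ (f : Polynomial k) (a : QQ k), q = iH k f + yy k * a := by
  induction q using MvPolynomial.induction_on with
  | C c => exact ⟨Polynomial.C c, 0, by simp [iH, MvPolynomial.algebraMap_eq]⟩
  | add p q hp hq =>
    obtain ⟨f, a, rfl⟩ := hp; obtain ⟨f', a', rfl⟩ := hq
    exact ⟨f + f', a + a', by rw [map_add]; ring⟩
  | mul_X p n hp =>
    obtain ⟨f, a, rfl⟩ := hp
    fin_cases n
    · exact ⟨f * Polynomial.X, a * xx k, by rw [map_mul]; show _ = _ + yy k * (a * xx k); simp [iH, xx]; ring⟩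
    · exact ⟨0, iH k f + a * yy k, by rw [map_zero]; show _ * yy k = _; ring⟩
lemma decomp_x (q : QQ k) : ∃ u v : QQ k, q = sH k u + xx k * sH k v := by
  induction q using MvPolynomial.induction_on with
  | C c => exact ⟨MvPolynomial.C c, 0, by simp [sH]⟩
  | add p q hp hq =>
    obtain ⟨u, v, rfl⟩ := hp; obtain ⟨u', v', rfl⟩ := hq
    exact ⟨u + u', v + v', by rw [map_add, map_add]; ring⟩
  | mul_X p n hp =>
    obtain ⟨u, v, rfl⟩ := hp
    fin_cases n
    · exact ⟨xx k * v, u, by rw [map_mul, sH_x]; show _ * xx k = _; ring⟩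
    · exact ⟨u * yy k, v * yy k, by rw [map_mul, map_mul, sH_y]; show _ * yy k = _; ring⟩

lemma mem_iff (M : Matrix (Fin 2) (Fin 2) (QQ k)) :
    M ∈ Sset' k ↔ ∃ (f : Polynomial k) (a b c d : QQ k),
      M = !![iH k f + yy k * a, b; yy k * c,
             iH k (f.comp (Polynomial.X ^ 2)) + yy k * d] := by
  constructor
  · rintro ⟨f, g, Y, rfl⟩
    refine ⟨f, Y 0 0, iH k g + yy k * Y 0 1, Y 1 0, Y 1 1, ?_⟩
    have hY : Y = !![Y 0 0, Y 0 1; Y 1 0, Y 1 1] := by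
      ext i j; fin_cases i <;> fin_cases j <;> rfl
    rw [hY, smul_ff, add_ff]
    refine ext_ff ?_ ?_ ?_ ?_ <;> simp
  · rintro ⟨f, a, b, c, d, rfl⟩
    obtain ⟨g, b', rfl⟩ := decomp_y b
    exact ⟨f, g, !![a, b'; c, d], by rw [smul_ff, add_ff]; exact ext_ff rfl rfl (by ring) rfl⟩

noncomputable def cm (q : QQ k) : Matrix (Fin 2) (Fin 2) (QQ k) := !![q, 0; 0, sH k q]

lemma cm_mem (q : QQ k) : cm q ∈ Sset' k := by
  obtain ⟨f, a, rfl⟩ := decomp_y q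
  rw [mem_iff]
  refine ⟨f, a, 0, 0, sH k a, ?_⟩
  rw [cm]
  exact ext_ff rfl rfl (by ring) (by rw [map_add, map_mul, sH_i, sH_y])


variable (k)

noncomputable def gL : Fin 6 → Matrix (Fin 2) (Fin 2) (QQ k) :=
  ![1, !![0, 1; 0, 0], !![0, 0; yy k, 0], !![0, 0; xx k * yy k, 0],
    !![0, 0; 0, yy k], !![0, 0; 0, xx k * yy k]]

noncomputable def gR : Fin 6 → Matrix (Fin 2) (Fin 2) (QQ k) :=
  ![1, !![0, 1; 0, 0], !![0, xx k; 0, 0], !![0, 0; yy k, 0],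
    !![0, 0; 0, yy k], !![0, 0; 0, xx k * yy k]]

variable {k}

lemma cons_val_five' {α : Type*} (a b c d e f : α) : ![a, b, c, d, e, f] 5 = f := rfl

lemma one_mem' : (1 : Matrix (Fin 2) (Fin 2) (QQ k)) ∈ Sset' k := by
  rw [mem_iff]
  refine ⟨1, 0, 0, 0, 0, ?_⟩
  rw [Matrix.one_fin_two]
  refine ext_ff ?_ rfl ?_ ?_ <;> simp [Polynomial.one_comp]

lemma gL_mem : ∀ i, gL k i ∈ Sset' k := by
  intro i
  fin_cases i
  · exact one_mem'
  all_goals rw [mem_iff]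
  · exact ⟨0, 0, 1, 0, 0, by refine ext_ff ?_ rfl ?_ ?_ <;> first | rfl | ring1 | (simp [Polynomial.zero_comp]; ring1) | simp [Polynomial.zero_comp]⟩
  · exact ⟨0, 0, 0, 1, 0, by refine ext_ff ?_ ?_ ?_ ?_ <;> first | rfl | ring1 | (simp [Polynomial.zero_comp]; ring1) | simp [Polynomial.zero_comp]⟩
  · exact ⟨0, 0, 0, xx k, 0, by refine ext_ff ?_ ?_ ?_ ?_ <;> first | rfl | ring1 | (simp [Polynomial.zero_comp]; ring1) | simp [Polynomial.zero_comp]⟩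
  · exact ⟨0, 0, 0, 0, 1, by refine ext_ff ?_ ?_ ?_ ?_ <;> first | rfl | ring1 | (simp [Polynomial.zero_comp]; ring1) | simp [Polynomial.zero_comp]⟩
  · exact ⟨0, 0, 0, 0, xx k, by refine ext_ff ?_ ?_ ?_ ?_ <;> first | rfl | ring1 | (simp [Polynomial.zero_comp]; ring1) | simp [Polynomial.zero_comp]⟩

lemma gR_mem : ∀ i, gR k i ∈ Sset' k := by
  intro i
  fin_cases i
  · exact one_mem'
  all_goals rw [mem_iff]
  · exact ⟨0, 0, 1, 0, 0, by refine ext_ff ?_ rfl ?_ ?_ <;> first | rfl | ring1 | (simp [Polynomial.zero_comp]; ring1) | simp [Polynomial.zero_comp]⟩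
  · exact ⟨0, 0, xx k, 0, 0, by
      refine ext_ff ?_ rfl ?_ ?_ <;> first | rfl | ring1 | (simp [Polynomial.zero_comp]; ring1) | simp [Polynomial.zero_comp]⟩
  · exact ⟨0, 0, 0, 1, 0, by refine ext_ff ?_ ?_ ?_ ?_ <;> first | rfl | ring1 | (simp [Polynomial.zero_comp]; ring1) | simp [Polynomial.zero_comp]⟩
  · exact ⟨0, 0, 0, 0, 1, by refine ext_ff ?_ ?_ ?_ ?_ <;> first | rfl | ring1 | (simp [Polynomial.zero_comp]; ring1) | simp [Polynomial.zero_comp]⟩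
  · exact ⟨0, 0, 0, 0, xx k, by refine ext_ff ?_ ?_ ?_ ?_ <;> first | rfl | ring1 | (simp [Polynomial.zero_comp]; ring1) | simp [Polynomial.zero_comp]⟩

lemma left_repr {s : Matrix (Fin 2) (Fin 2) (QQ k)} (hs : s ∈ Sset' k) :
    ∃ h : Fin 6 → QQ k, s = ∑ i, cm (h i) * gL k i := by
  rw [mem_iff] at hs
  obtain ⟨f, a, b, c, d, rfl⟩ := hs
  obtain ⟨u, v, hc⟩ := decomp_x c
  obtain ⟨u', v', hd⟩ := decomp_x (d - sH k a)
  refine ⟨![iH k f + yy k * a, b, u, v, u', v'], ?_⟩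
  rw [Fin.sum_univ_six]
  simp only [gL, cm, Matrix.cons_val_zero, Matrix.cons_val_one, Matrix.head_cons,
    Matrix.cons_val_two, Matrix.tail_cons, Matrix.cons_val_three, Matrix.cons_val_four,
    Matrix.cons_val_succ, cons_val_five', Matrix.mul_one, Matrix.one_fin_two,
    Matrix.mul_fin_two, add_ff]
  refine ext_ff ?_ ?_ ?_ ?_
  · ring
  · ring
  · rw [hc]; ring
  · rw [map_add, map_mul, sH_i, sH_y]
    linear_combination yy k * hd

lemma right_repr {s : Matrix (Fin 2) (Fin 2) (QQ k)} (hs : s ∈ Sset' k) :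
    ∃ h : Fin 6 → QQ k, s = ∑ i, gR k i * cm (h i) := by
  rw [mem_iff] at hs
  obtain ⟨f, a, b, c, d, rfl⟩ := hs
  obtain ⟨u, v, hb⟩ := decomp_x b
  obtain ⟨u', v', hd⟩ := decomp_x (d - sH k a)
  refine ⟨![iH k f + yy k * a, u, v, c, u', v'], ?_⟩
  rw [Fin.sum_univ_six]
  simp only [gR, cm, Matrix.cons_val_zero, Matrix.cons_val_one, Matrix.head_cons,
    Matrix.cons_val_two, Matrix.tail_cons, Matrix.cons_val_three, Matrix.cons_val_four,
    Matrix.cons_val_succ, cons_val_five', Matrix.one_mul, Matrix.one_fin_two,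
    Matrix.mul_fin_two, add_ff]
  refine ext_ff ?_ ?_ ?_ ?_
  · ring
  · rw [hb]; ring
  · ring
  · rw [map_add, map_mul, sH_i, sH_y]
    linear_combination yy k * hd

variable (k)

noncomputable def Ssub' : Subring (Matrix (Fin 2) (Fin 2) (QQ k)) where
  carrier := Sset' k
  one_mem' := one_mem'
  zero_mem' := by
    refine (mem_iff (0 : Matrix (Fin 2) (Fin 2) (QQ k))).2 ?_
    exact ⟨0, 0, 0, 0, 0, by ext i j; fin_cases i <;> fin_cases j <;>
      simp [Polynomial.zero_comp]⟩
  add_mem' := by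
    intro A B hA hB
    obtain ⟨f, a1, b1, c1, d1, rfl⟩ := (mem_iff A).1 hA
    obtain ⟨f', a2, b2, c2, d2, rfl⟩ := (mem_iff B).1 hB
    refine (mem_iff _).2 ⟨f + f', a1 + a2, b1 + b2, c1 + c2, d1 + d2, ?_⟩
    rw [add_ff]
    refine ext_ff (by rw [map_add]; ring) rfl (by ring) ?_
    rw [Polynomial.add_comp, map_add]; ring
  neg_mem' := by
    intro A hA
    obtain ⟨f, a, b, c, d, rfl⟩ := (mem_iff A).1 hA
    refine (mem_iff _).2 ⟨-f, -a, -b, -c, -d, ?_⟩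
    have : (-(!![iH k f + yy k * a, b; yy k * c,
        iH k (f.comp (Polynomial.X ^ 2)) + yy k * d]) : Matrix (Fin 2) (Fin 2) (QQ k)) =
        !![-(iH k f + yy k * a), -b; -(yy k * c),
           -(iH k (f.comp (Polynomial.X ^ 2)) + yy k * d)] := by
      ext i j; fin_cases i <;> fin_cases j <;> simp
    rw [this]
    refine ext_ff (by rw [map_neg]; ring) rfl (by ring) ?_
    rw [Polynomial.neg_comp, map_neg]; ring
  mul_mem' := by
    intro A B hA hB
    obtain ⟨f, a1, b1, c1, d1, rfl⟩ := (mem_iff A).1 hA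
    obtain ⟨f', a2, b2, c2, d2, rfl⟩ := (mem_iff B).1 hB
    refine (mem_iff _).2 ⟨f * f',
      iH k f * a2 + a1 * iH k f' + yy k * (a1 * a2) + b1 * c2,
      (iH k f + yy k * a1) * b2 + b1 * (iH k (f'.comp (Polynomial.X ^ 2)) + yy k * d2),
      c1 * (iH k f' + yy k * a2) + (iH k (f.comp (Polynomial.X ^ 2)) + yy k * d1) * c2,
      c1 * b2 + iH k (f.comp (Polynomial.X ^ 2)) * d2 +
        d1 * iH k (f'.comp (Polynomial.X ^ 2)) + yy k * (d1 * d2), ?_⟩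
    rw [Matrix.mul_fin_two]
    refine ext_ff (by rw [map_mul]; ring) (by ring) (by ring) ?_
    rw [Polynomial.mul_comp, map_mul]; ring

variable {k}

lemma coe_Ssub : (Ssub' k : Set (Matrix (Fin 2) (Fin 2) (QQ k))) = Sset' k := rfl

variable (k)

noncomputable def phi : QQ k →+* Ssub' k where
  toFun q := ⟨cm q, cm_mem q⟩
  map_one' := by
    apply Subtype.ext
    show cm (1 : QQ k) = 1
    rw [cm, map_one, Matrix.one_fin_two]
  map_mul' p q := by
    apply Subtype.ext
    show cm (p * q) = cm p * cm q
    rw [cm, cm, cm, Matrix.mul_fin_two, map_mul]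
    exact ext_ff (by ring) (by ring) (by ring) (by ring)
  map_zero' := by
    apply Subtype.ext
    show cm (0 : QQ k) = 0
    rw [cm, map_zero]
    ext i j; fin_cases i <;> fin_cases j <;> simp
  map_add' p q := by
    apply Subtype.ext
    show cm (p + q) = cm p + cm q
    rw [cm, cm, cm, add_ff, map_add]
    exact ext_ff rfl (by ring) (by ring) rfl

noncomputable def phiOp : QQ k →+* (Ssub' k)ᵐᵒᵖ where
  toFun q := MulOpposite.op (phi k q)
  map_one' := by
    show MulOpposite.op (phi k 1) = 1
    rw [map_one, MulOpposite.op_one]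
  map_mul' p q := by
    show MulOpposite.op (phi k (p * q)) = MulOpposite.op (phi k p) * MulOpposite.op (phi k q)
    rw [mul_comm p q, map_mul, MulOpposite.op_mul]
  map_zero' := by
    show MulOpposite.op (phi k 0) = 0
    rw [map_zero, MulOpposite.op_zero]
  map_add' p q := by
    show MulOpposite.op (phi k (p + q)) = MulOpposite.op (phi k p) + MulOpposite.op (phi k q)
    rw [map_add, MulOpposite.op_add]

variable {k}

lemma noeth_of_hom_fg {R A : Type*} [CommRing R] [Ring A] [IsNoetherianRing R] (f : R →+* A)
    {n : ℕ} (g : Fin n → A) (hg : ∀ a : A, ∃ h : Fin n → R, a = ∑ i, f (h i) * g i) :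
    IsNoetherianRing A := by
  classical
  letI : Module R A := f.toModule
  haveI : IsScalarTower R A A := ⟨fun q s t => mul_assoc (f q) s t⟩
  haveI : Module.Finite R A := by
    refine ⟨⟨Finset.univ.image g, ?_⟩⟩
    rw [eq_top_iff]
    rintro a -
    obtain ⟨h, rfl⟩ := hg a
    refine Submodule.sum_mem _ fun i _ => ?_
    exact Submodule.smul_mem _ (h i) (Submodule.subset_span
      (Finset.mem_coe.2 (Finset.mem_image_of_mem _ (Finset.mem_univ i))))
  exact isNoetherianRing_iff.mpr (isNoetherian_of_tower R
    (isNoetherian_of_isNoetherianRing_of_finite R A))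

lemma noethL : IsNoetherianRing (Ssub' k) := by
  refine noeth_of_hom_fg (phi k) (fun i => (⟨gL k i, gL_mem i⟩ : Ssub' k)) ?_
  rintro ⟨s, hs⟩
  obtain ⟨h, hrepr⟩ := left_repr hs
  refine ⟨h, Subtype.ext ?_⟩
  rw [AddSubmonoidClass.coe_finset_sum]
  exact hrepr.trans (Finset.sum_congr rfl fun i _ => rfl)

lemma noethR : IsNoetherianRing (Ssub' k)ᵐᵒᵖ := by
  refine noeth_of_hom_fg (phiOp k)
    (fun i => MulOpposite.op (⟨gR k i, gR_mem i⟩ : Ssub' k)) ?_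
  intro a
  obtain ⟨h, hrepr⟩ := right_repr a.unop.2
  refine ⟨h, ?_⟩
  calc a = MulOpposite.op a.unop := rfl
  _ = MulOpposite.op (∑ i, (⟨gR k i, gR_mem i⟩ : Ssub' k) * phi k (h i)) := by
        congr 1
        refine Subtype.ext ?_
        rw [AddSubmonoidClass.coe_finset_sum]
        exact hrepr.trans (Finset.sum_congr rfl fun i _ => rfl)
  _ = ∑ i, phiOp k (h i) * MulOpposite.op (⟨gR k i, gR_mem i⟩ : Ssub' k) := by
        rw [Finset.op_sum]
        refine Finset.sum_congr rfl fun i _ => ?_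
        rw [show phiOp k (h i) = MulOpposite.op (phi k (h i)) from rfl, ← MulOpposite.op_mul]

end SThmAux


open Polynomial

/-- Let `S = {[[f(x), g(x)], [0, f(x²)]] : f, g ∈ k[x]} + y·M₂(k[x,y])` and let `C ⊆ S` be
the subring of diagonal matrices `c f = diag(f(x,y), f(x²,y))` for `f ∈ k[x,y]`, so that
`f ↦ c f` is an injective ring homomorphism `k[x,y] ≅ C`.  Then `S` is finitely generated
as a left `C`-module and as a right `C`-module; consequently `S` is a left and right
noetherian ring. -/
theorem S_module_finite_and_noetherian (k : Type*) [Field k] :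
    let Q := MvPolynomial (Fin 2) k
    let ι : Polynomial k → Q := fun f => Polynomial.aeval (MvPolynomial.X 0 : Q) f
    let σ : Q → Q := fun f =>
      MvPolynomial.aeval (fun i : Fin 2 =>
        if i = 0 then (MvPolynomial.X 0 : Q) ^ 2 else (MvPolynomial.X 1 : Q)) f
    let c : Q → Matrix (Fin 2) (Fin 2) Q := fun f => !![f, 0; 0, σ f]
    let Sset : Set (Matrix (Fin 2) (Fin 2) Q) :=
      {M | ∃ f g : Polynomial k, ∃ Y : Matrix (Fin 2) (Fin 2) Q,
        M = !![ι f, ι g; 0, ι (f.comp (Polynomial.X ^ 2))] + (MvPolynomial.X 1 : Q) • Y}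
    (Function.Injective c ∧ c 1 = 1 ∧ (∀ f g : Q, c (f + g) = c f + c g) ∧
      (∀ f g : Q, c (f * g) = c f * c g) ∧ ∀ f : Q, c f ∈ Sset) ∧
    (∃ (n : ℕ) (g : Fin n → Matrix (Fin 2) (Fin 2) Q),
      (∀ i, g i ∈ Sset) ∧
      ∀ s ∈ Sset, ∃ h : Fin n → Q, s = ∑ i, c (h i) * g i) ∧
    (∃ (n : ℕ) (g : Fin n → Matrix (Fin 2) (Fin 2) Q),
      (∀ i, g i ∈ Sset) ∧
      ∀ s ∈ Sset, ∃ h : Fin n → Q, s = ∑ i, g i * c (h i)) ∧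
    ∃ Ssub : Subring (Matrix (Fin 2) (Fin 2) Q),
      (Ssub : Set (Matrix (Fin 2) (Fin 2) Q)) = Sset ∧
      IsNoetherianRing Ssub ∧ IsNoetherianRing Ssubᵐᵒᵖ := by
  intro Q ι σ c Sset
  refine ⟨⟨?_, ?_, ?_, ?_, ?_⟩, ?_, ?_, ?_⟩
  · intro p q hpq
    have h2 : (!![p, 0; 0, SThmAux.sH k p] : Matrix (Fin 2) (Fin 2) (SThmAux.QQ k)) =
        !![q, 0; 0, SThmAux.sH k q] := hpq
    simpa using congrFun (congrFun h2 0) 0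
  · show (!![(1 : SThmAux.QQ k), 0; 0, SThmAux.sH k 1]) = 1
    rw [map_one, Matrix.one_fin_two]
  · intro p q
    show (!![p + q, 0; 0, SThmAux.sH k (p + q)]) =
      !![p, 0; 0, SThmAux.sH k p] + !![q, 0; 0, SThmAux.sH k q]
    rw [add_ff, map_add]
    exact ext_ff rfl (by ring) (by ring) rfl
  · intro p q
    show (!![p * q, 0; 0, SThmAux.sH k (p * q)]) =
      !![p, 0; 0, SThmAux.sH k p] * !![q, 0; 0, SThmAux.sH k q]
    rw [Matrix.mul_fin_two, map_mul]
    exact ext_ff (by ring) (by ring) (by ring) (by ring)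
  · exact fun q => SThmAux.cm_mem q
  · exact ⟨6, SThmAux.gL k, fun i => SThmAux.gL_mem i, fun s hs => SThmAux.left_repr hs⟩
  · exact ⟨6, SThmAux.gR k, fun i => SThmAux.gR_mem i, fun s hs => SThmAux.right_repr hs⟩
  · exact ⟨SThmAux.Ssub' k, rfl, SThmAux.noethL, SThmAux.noethR⟩
end

section
/- Let R = {[[f(x), g(x)],[0, f(x²)]] : f, g ∈ k[x]}, α = diag(x, x²), β = e₁₂, and let Γ be the standard filtration Γ₀ = k, Γ₁ = k + kα + kβ, Γₙ = Γ₁ⁿ. Then the associated graded ring gr_Γ R is spanned as a k-vector space by {aⁿ, b aⁿ, a b aⁿ : n ≥ 0}, where a, b are the images of α, β; in particular gr_Γ R is a finitely generated right module over the subring k[a], hence right noetherian. -/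
set_option maxHeartbeats 1000000
set_option synthInstance.maxHeartbeats 400000

open Polynomial

section GradedRing

variable {k R : Type*} [Field k] [Ring R] [Algebra k R]

/-- The Rees ring `⊕ᵢ Γᵢ tⁱ` of a filtration `Γ`, as a subalgebra of `R[t]`. -/
def reesAlgebra' (Γ : ℕ → Submodule k R) (hone : 1 ∈ Γ 0)
    (hmul : ∀ i j, Γ i * Γ j ≤ Γ (i + j)) : Subalgebra k (Polynomial R) where
  carrier := {p | ∀ i, p.coeff i ∈ Γ i}
  algebraMap_mem' := fun c i => by
    rw [Polynomial.algebraMap_apply]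
    rcases eq_or_ne i 0 with h | h
    · subst h
      rw [Polynomial.coeff_C_zero]
      have : (algebraMap k R) c = c • (1 : R) := (Algebra.algebraMap_eq_smul_one c)
      rw [this]
      exact (Γ 0).smul_mem c hone
    · rw [Polynomial.coeff_C, if_neg h]
      exact (Γ i).zero_mem
  add_mem' := fun {p q} hp hq i => by
    rw [Polynomial.coeff_add]; exact (Γ i).add_mem (hp i) (hq i)
  mul_mem' := fun {p q} hp hq n => by
    rw [Polynomial.coeff_mul]
    refine (Γ n).sum_mem fun x hx => ?_
    have hxn : x.1 + x.2 = n := Finset.HasAntidiagonal.mem_antidiagonal.mp hx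
    exact hxn ▸ hmul x.1 x.2 (Submodule.mul_mem_mul (hp x.1) (hq x.2))

/-- `t = X` as an element of the Rees ring. -/
noncomputable def reesT (Γ : ℕ → Submodule k R) (hone : 1 ∈ Γ 0) (hmono : Monotone Γ)
    (hmul : ∀ i j, Γ i * Γ j ≤ Γ (i + j)) : reesAlgebra' Γ hone hmul :=
  ⟨Polynomial.X, fun i => by
    rw [Polynomial.coeff_X]
    split
    · next h => exact hmono (by omega : 0 ≤ i) hone
    · exact (Γ i).zero_mem⟩

/-- The associated graded ring `gr_Γ R = ⊕ᵢ Γᵢ/Γᵢ₋₁`, realized as `Rees(Γ)/(t)`. -/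
def grRing (Γ : ℕ → Submodule k R) (hone : 1 ∈ Γ 0) (hmono : Monotone Γ)
    (hmul : ∀ i j, Γ i * Γ j ≤ Γ (i + j)) : Type _ :=
  (TwoSidedIdeal.span {reesT Γ hone hmono hmul}).ringCon.Quotient

noncomputable instance grRing.instRing (Γ : ℕ → Submodule k R) (hone : 1 ∈ Γ 0)
    (hmono : Monotone Γ) (hmul : ∀ i j, Γ i * Γ j ≤ Γ (i + j)) :
    Ring (grRing Γ hone hmono hmul) :=
  inferInstanceAs (Ring (TwoSidedIdeal.span {reesT Γ hone hmono hmul}).ringCon.Quotient)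

noncomputable instance grRing.instSMul (Γ : ℕ → Submodule k R) (hone : 1 ∈ Γ 0)
    (hmono : Monotone Γ) (hmul : ∀ i j, Γ i * Γ j ≤ Γ (i + j)) :
    SMul k (grRing Γ hone hmono hmul) :=
  inferInstanceAs (SMul k (TwoSidedIdeal.span {reesT Γ hone hmono hmul}).ringCon.Quotient)

noncomputable instance grRing.instModule (Γ : ℕ → Submodule k R) (hone : 1 ∈ Γ 0)
    (hmono : Monotone Γ) (hmul : ∀ i j, Γ i * Γ j ≤ Γ (i + j)) :
    Module k (grRing Γ hone hmono hmul) :=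
  Function.Surjective.module k
    (RingHom.toAddMonoidHom
      (RingCon.mk' (TwoSidedIdeal.span {reesT Γ hone hmono hmul}).ringCon))
    (fun x => Quotient.inductionOn' x fun r => ⟨r, rfl⟩)
    (fun _ _ => rfl)

noncomputable instance grRing.instAlgebra (Γ : ℕ → Submodule k R) (hone : 1 ∈ Γ 0)
    (hmono : Monotone Γ) (hmul : ∀ i j, Γ i * Γ j ≤ Γ (i + j)) :
    Algebra k (grRing Γ hone hmono hmul) :=
  Algebra.ofModule
    (fun r x y => by
      induction x using Quotient.inductionOn' with
      | h p =>
      induction y using Quotient.inductionOn' with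
      | h q =>
      show Quotient.mk'' (r • p * q) = Quotient.mk'' (r • (p * q))
      rw [smul_mul_assoc])
    (fun r x y => by
      induction x using Quotient.inductionOn' with
      | h p =>
      induction y using Quotient.inductionOn' with
      | h q =>
      show Quotient.mk'' (p * r • q) = Quotient.mk'' (r • (p * q))
      rw [mul_smul_comm])

end GradedRing

section Example16

variable (k : Type*) [Field k]

/-- `α = diag(x, x²)`. -/
noncomputable def αmat : Matrix (Fin 2) (Fin 2) (Polynomial k) :=
  !![Polynomial.X, 0; 0, Polynomial.X ^ 2]

/-- `β = e₁₂`. -/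
noncomputable def βmat : Matrix (Fin 2) (Fin 2) (Polynomial k) := !![0, 1; 0, 0]

/-- The ring `R`, generated as a `k`-algebra by `α` and `β`. -/
noncomputable def Ralg : Subalgebra k (Matrix (Fin 2) (Fin 2) (Polynomial k)) :=
  Algebra.adjoin k {αmat k, βmat k}

noncomputable def αel : Ralg k :=
  ⟨αmat k, Algebra.subset_adjoin (Set.mem_insert _ _)⟩

noncomputable def βel : Ralg k :=
  ⟨βmat k, Algebra.subset_adjoin (Set.mem_insert_of_mem _ rfl)⟩

/-- The standard filtration `Γ₀ = k`, `Γ₁ = k + kα + kβ`, `Γₙ = Γ₁ⁿ` on `R`. -/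
noncomputable def stdFil : ℕ → Submodule k (Ralg k) :=
  fun n => (Submodule.span k {(1 : Ralg k), αel k, βel k}) ^ n

lemma stdFil_one_mem : 1 ∈ stdFil k 0 := by
  rw [stdFil, pow_zero]
  exact Submodule.one_le.mp le_rfl

lemma stdFil_mono : Monotone (stdFil k) := by
  apply monotone_nat_of_le_succ
  intro n
  rw [stdFil, stdFil, pow_succ]
  calc (Submodule.span k {(1 : Ralg k), αel k, βel k}) ^ n
      = (Submodule.span k {(1 : Ralg k), αel k, βel k}) ^ n * 1 := (mul_one _).symm
    _ ≤ _ := mul_le_mul' le_rfl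
        (Submodule.one_le.mpr (Submodule.subset_span (Set.mem_insert _ _)))

lemma stdFil_mul : ∀ i j, stdFil k i * stdFil k j ≤ stdFil k (i + j) := fun i j =>
  le_of_eq (pow_add _ i j).symm

/-- The associated graded ring of the standard filtration on `R`. -/
noncomputable def grStd : Type _ :=
  grRing (stdFil k) (stdFil_one_mem k) (stdFil_mono k) (stdFil_mul k)

noncomputable instance : Ring (grStd k) :=
  inferInstanceAs (Ring (grRing (stdFil k) (stdFil_one_mem k) (stdFil_mono k) (stdFil_mul k)))

noncomputable instance : Algebra k (grStd k) :=
  inferInstanceAs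
    (Algebra k (grRing (stdFil k) (stdFil_one_mem k) (stdFil_mono k) (stdFil_mul k)))

/-- `a`, the image of `α` in degree 1 of `gr R`. -/
noncomputable def aGr : grStd k :=
  (TwoSidedIdeal.span
    {reesT (stdFil k) (stdFil_one_mem k) (stdFil_mono k) (stdFil_mul k)}).ringCon.mk'
    ⟨Polynomial.monomial 1 (αel k), by
      intro i
      rw [Polynomial.coeff_monomial]
      split
      · next h =>
        subst h
        rw [stdFil, pow_one]
        exact Submodule.subset_span (Set.mem_insert_of_mem _ (Set.mem_insert _ _))
      · exact Submodule.zero_mem _⟩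

/-- `b`, the image of `β` in degree 1 of `gr R`. -/
noncomputable def bGr : grStd k :=
  (TwoSidedIdeal.span
    {reesT (stdFil k) (stdFil_one_mem k) (stdFil_mono k) (stdFil_mul k)}).ringCon.mk'
    ⟨Polynomial.monomial 1 (βel k), by
      intro i
      rw [Polynomial.coeff_monomial]
      split
      · next h =>
        subst h
        rw [stdFil, pow_one]
        exact Submodule.subset_span
          (Set.mem_insert_of_mem _ (Set.mem_insert_of_mem _ rfl))
      · exact Submodule.zero_mem _⟩


/-! ### Auxiliary lemmas -/

open Pointwise

def Ualg : Subalgebra k (Matrix (Fin 2) (Fin 2) (Polynomial k)) where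
  carrier := {M | ∃ f g : Polynomial k, M = !![f, g; 0, f.comp (Polynomial.X ^ 2)]}
  algebraMap_mem' := fun c => ⟨Polynomial.C c, 0, by
    ext i j
    fin_cases i <;> fin_cases j <;>
      simp [Matrix.algebraMap_eq_diagonal, Matrix.diagonal]⟩
  add_mem' := by
    rintro _ _ ⟨f, g, rfl⟩ ⟨f', g', rfl⟩
    exact ⟨f + f', g + g', by ext i j; fin_cases i <;> fin_cases j <;> simp [add_comp]⟩
  mul_mem' := by
    rintro _ _ ⟨f, g, rfl⟩ ⟨f', g', rfl⟩
    refine ⟨f * f', f * g' + g * f'.comp (Polynomial.X ^ 2), ?_⟩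
    rw [Matrix.mul_fin_two]
    ext i j
    fin_cases i <;> fin_cases j <;> simp [mul_comp]

lemma aeval_alpha (f : Polynomial k) :
    Polynomial.aeval (αmat k) f = !![f, 0; 0, f.comp (Polynomial.X ^ 2)] := by
  induction f using Polynomial.induction_on' with
  | add p q hp hq =>
    rw [map_add, hp, hq]
    ext i j; fin_cases i <;> fin_cases j <;> simp [add_comp]
  | monomial n c =>
    have hα : αmat k = Matrix.diagonal ![Polynomial.X, Polynomial.X ^ 2] := by
      ext i j; fin_cases i <;> fin_cases j <;> simp [αmat, Matrix.diagonal]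
    rw [aeval_monomial, hα, Matrix.diagonal_pow, Matrix.algebraMap_eq_diagonal,
      Matrix.diagonal_mul_diagonal]
    ext i j
    fin_cases i <;> fin_cases j <;>
      simp [Matrix.diagonal, ← C_mul_X_pow_eq_monomial, mul_comp, ← pow_mul, mul_comm 2 n]

lemma Ralg_eq_Ualg : Ralg k = Ualg k := by
  apply le_antisymm
  · apply Algebra.adjoin_le
    rintro x (rfl | rfl)
    · exact ⟨Polynomial.X, 0, by ext i j; fin_cases i <;> fin_cases j <;> simp [αmat]⟩
    · exact ⟨0, 1, by ext i j; fin_cases i <;> fin_cases j <;> simp [βmat]⟩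
  · rintro M ⟨f, g, rfl⟩
    have hf : Polynomial.aeval (αmat k) f ∈ Ralg k :=
      Algebra.adjoin_mono (Set.singleton_subset_iff.mpr (Set.mem_insert _ _))
        (Polynomial.aeval_mem_adjoin_singleton k _)
    have hg : Polynomial.aeval (αmat k) g ∈ Ralg k :=
      Algebra.adjoin_mono (Set.singleton_subset_iff.mpr (Set.mem_insert _ _))
        (Polynomial.aeval_mem_adjoin_singleton k _)
    have hβ : βmat k ∈ Ralg k := Algebra.subset_adjoin (Set.mem_insert_of_mem _ rfl)
    have key : !![f, g; 0, f.comp (Polynomial.X ^ 2)] =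
        Polynomial.aeval (αmat k) f + Polynomial.aeval (αmat k) g * βmat k := by
      rw [aeval_alpha, aeval_alpha]
      ext i j
      fin_cases i <;> fin_cases j <;> simp [βmat, Matrix.mul_apply, Fin.sum_univ_two]
    rw [key]
    exact add_mem hf (mul_mem hg hβ)

lemma Ralg_coe : (Ralg k : Set (Matrix (Fin 2) (Fin 2) (Polynomial k))) =
    {M | ∃ f g : Polynomial k, M = !![f, g; 0, f.comp (Polynomial.X ^ 2)]} := by
  rw [Ralg_eq_Ualg]; rfl

/-- The key matrix relation `α²β = βα`. -/
lemma rel_ααβ : αel k * αel k * βel k = βel k * αel k := by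
  apply Subtype.ext
  show αmat k * αmat k * βmat k = βmat k * αmat k
  simp only [αmat, βmat, Matrix.mul_fin_two]
  norm_num
  ring_nf

/-- `β M β = 0` for every `M ∈ R`. -/
lemma βel_sandwich (M : Ralg k) : βel k * M * βel k = 0 := by
  have hM : (M : Matrix (Fin 2) (Fin 2) (Polynomial k)) ∈ Ualg k := by
    rw [← Ralg_eq_Ualg]; exact M.2
  obtain ⟨f, g, hfg⟩ := hM
  apply Subtype.ext
  show βmat k * (M : Matrix (Fin 2) (Fin 2) (Polynomial k)) * βmat k = 0
  rw [hfg]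
  simp only [βmat, Matrix.mul_fin_two]
  ext i j
  fin_cases i <;> fin_cases j <;> simp

/-- Membership of `α` in `Γ₁`. -/
lemma αel_mem_fil : αel k ∈ stdFil k 1 := by
  rw [stdFil, pow_one]
  exact Submodule.subset_span (Set.mem_insert_of_mem _ (Set.mem_insert _ _))

lemma βel_mem_fil : βel k ∈ stdFil k 1 := by
  rw [stdFil, pow_one]
  exact Submodule.subset_span (Set.mem_insert_of_mem _ (Set.mem_insert_of_mem _ rfl))

lemma stdFil_eq_span_pow (n : ℕ) :
    stdFil k n = Submodule.span k ((({1, αel k, βel k} : Set (Ralg k))) ^ n) := by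
  rw [stdFil, Submodule.span_pow]

/-- The quotient map from the Rees ring to the graded ring. -/
noncomputable def qSt :
    reesAlgebra' (stdFil k) (stdFil_one_mem k) (stdFil_mul k) →+* grStd k :=
  (TwoSidedIdeal.span
    {reesT (stdFil k) (stdFil_one_mem k) (stdFil_mono k) (stdFil_mul k)}).ringCon.mk'

lemma qSt_surj : Function.Surjective (qSt k) := fun x =>
  Quotient.inductionOn' x fun p => ⟨p, rfl⟩

lemma qSt_smul (c : k) (p) : qSt k (c • p) = c • qSt k p := rfl

lemma qSt_zero_of_mem {p} (hp : p ∈ TwoSidedIdeal.span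
    {reesT (stdFil k) (stdFil_one_mem k) (stdFil_mono k) (stdFil_mul k)}) :
    qSt k p = 0 := by
  have : qSt k p = qSt k 0 :=
    (RingCon.eq _).mpr (by rwa [TwoSidedIdeal.rel_iff, sub_zero])
  simpa using this

/-- `t` is killed by the quotient map. -/
lemma qSt_t : qSt k (reesT (stdFil k) (stdFil_one_mem k) (stdFil_mono k) (stdFil_mul k)) = 0 :=
  qSt_zero_of_mem k (TwoSidedIdeal.subset_span rfl)

/-- Monomial elements of the Rees ring. -/
noncomputable def monSt (n : ℕ) (r : Ralg k) (hr : r ∈ stdFil k n) :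
    reesAlgebra' (stdFil k) (stdFil_one_mem k) (stdFil_mul k) :=
  ⟨Polynomial.monomial n r, fun i => by
    rw [Polynomial.coeff_monomial]
    split
    · next h => subst h; exact hr
    · exact Submodule.zero_mem _⟩

lemma monSt_mul (n m : ℕ) (r s : Ralg k) (hr : r ∈ stdFil k n) (hs : s ∈ stdFil k m) :
    monSt k n r hr * monSt k m s hs =
      monSt k (n + m) (r * s) (stdFil_mul k n m (Submodule.mul_mem_mul hr hs)) :=
  Subtype.ext <| by
    show Polynomial.monomial n r * Polynomial.monomial m s = _
    rw [Polynomial.monomial_mul_monomial]; rfl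

lemma aGr_eq : aGr k = qSt k (monSt k 1 (αel k) (αel_mem_fil k)) := rfl

lemma bGr_eq : bGr k = qSt k (monSt k 1 (βel k) (βel_mem_fil k)) := rfl

/-- Relation `a²b = 0` in the graded ring. -/
lemma a2b_zero : aGr k * aGr k * bGr k = 0 := by
  rw [aGr_eq, bGr_eq, ← map_mul, ← map_mul, monSt_mul, monSt_mul]
  have hβα : βel k * αel k ∈ stdFil k 2 :=
    stdFil_mul k 1 1 (Submodule.mul_mem_mul (βel_mem_fil k) (αel_mem_fil k))
  have key : monSt k (1 + 1 + 1) (αel k * αel k * βel k)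
      (stdFil_mul k 2 1 (Submodule.mul_mem_mul
        (stdFil_mul k 1 1 (Submodule.mul_mem_mul (αel_mem_fil k) (αel_mem_fil k)))
        (βel_mem_fil k))) =
      monSt k 2 (βel k * αel k) hβα *
        reesT (stdFil k) (stdFil_one_mem k) (stdFil_mono k) (stdFil_mul k) := by
    apply Subtype.ext
    show Polynomial.monomial (1 + 1 + 1) (αel k * αel k * βel k) =
      Polynomial.monomial 2 (βel k * αel k) * Polynomial.X
    rw [rel_ααβ, ← monomial_one_one_eq_X, Polynomial.monomial_mul_monomial, mul_one]
  rw [key, map_mul, qSt_t, mul_zero]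

/-- Relation `b x b = 0` in the graded ring. -/
lemma bxb_zero (x : grStd k) : bGr k * x * bGr k = 0 := by
  obtain ⟨p, rfl⟩ := qSt_surj k x
  rw [bGr_eq, ← map_mul, ← map_mul]
  have : monSt k 1 (βel k) (βel_mem_fil k) * p * monSt k 1 (βel k) (βel_mem_fil k) = 0 := by
    apply Subtype.ext
    show Polynomial.monomial 1 (βel k) * (p : Polynomial (Ralg k)) *
      Polynomial.monomial 1 (βel k) = 0
    rw [← Polynomial.C_mul_X_eq_monomial]
    have hX : ∀ q : Polynomial (Ralg k), Polynomial.X * q = q * Polynomial.X :=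
      fun q => Polynomial.X_mul
    have hC : Polynomial.C (βel k) * (p : Polynomial (Ralg k)) * Polynomial.C (βel k) = 0 := by
      refine Polynomial.ext fun m => ?_
      rw [Polynomial.coeff_mul_C, Polynomial.coeff_C_mul, Polynomial.coeff_zero]
      simpa [mul_assoc] using βel_sandwich k ((p : Polynomial (Ralg k)).coeff m)
    calc Polynomial.C (βel k) * Polynomial.X * (p : Polynomial (Ralg k)) *
          (Polynomial.C (βel k) * Polynomial.X)
        = Polynomial.C (βel k) * (Polynomial.X * (p : Polynomial (Ralg k))) *
          (Polynomial.C (βel k) * Polynomial.X) := by rw [mul_assoc (Polynomial.C (βel k))]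
      _ = Polynomial.C (βel k) * ((p : Polynomial (Ralg k)) * Polynomial.X) *
          (Polynomial.C (βel k) * Polynomial.X) := by rw [hX]
      _ = Polynomial.C (βel k) * (p : Polynomial (Ralg k)) *
          (Polynomial.X * Polynomial.C (βel k)) * Polynomial.X := by
            simp only [mul_assoc]
      _ = Polynomial.C (βel k) * (p : Polynomial (Ralg k)) *
          (Polynomial.C (βel k) * Polynomial.X) * Polynomial.X := by rw [hX]
      _ = Polynomial.C (βel k) * (p : Polynomial (Ralg k)) * Polynomial.C (βel k) *
          Polynomial.X * Polynomial.X := by simp only [mul_assoc]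
      _ = 0 := by rw [hC, zero_mul, zero_mul]
  rw [this, map_zero]

lemma b_sq_zero : bGr k * bGr k = 0 := by
  have := bxb_zero k (1 : grStd k)
  rwa [mul_one] at this

/-- The span of the words `aⁿ, baⁿ, abaⁿ` is everything. -/
lemma span_words :
    Submodule.span k {x : grStd k | ∃ n : ℕ,
      x = aGr k ^ n ∨ x = bGr k * aGr k ^ n ∨ x = aGr k * bGr k * aGr k ^ n} = ⊤ := by
  set W := {x : grStd k | ∃ n : ℕ,
      x = aGr k ^ n ∨ x = bGr k * aGr k ^ n ∨ x = aGr k * bGr k * aGr k ^ n} with hW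
  set T := Submodule.span k W with hT
  -- closure under right multiplication by a
  have haT : ∀ x ∈ T, x * aGr k ∈ T := by
    intro x hx
    induction hx using Submodule.span_induction with
    | mem y hy =>
      obtain ⟨n, rfl | rfl | rfl⟩ := hy
      · exact Submodule.subset_span ⟨n + 1, Or.inl (pow_succ _ _).symm⟩
      · exact Submodule.subset_span ⟨n + 1, Or.inr (Or.inl (by rw [pow_succ, mul_assoc]))⟩
      · exact Submodule.subset_span ⟨n + 1, Or.inr (Or.inr (by rw [pow_succ, mul_assoc]))⟩
    | zero => rw [zero_mul]; exact Submodule.zero_mem _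
    | add y z _ _ hy hz => rw [add_mul]; exact Submodule.add_mem _ hy hz
    | smul c y _ hy => rw [smul_mul_assoc]; exact Submodule.smul_mem _ _ hy
  -- a^n * b ∈ T
  have hpow_b : ∀ n : ℕ, aGr k ^ n * bGr k ∈ T := by
    intro n
    match n with
    | 0 =>
      rw [pow_zero, one_mul]
      exact Submodule.subset_span ⟨0, Or.inr (Or.inl (by rw [pow_zero, mul_one]))⟩
    | 1 =>
      rw [pow_one]
      exact Submodule.subset_span ⟨0, Or.inr (Or.inr (by rw [pow_zero, mul_one]))⟩
    | (m + 2) =>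
      have : aGr k ^ (m + 2) * bGr k = aGr k ^ m * (aGr k * aGr k * bGr k) := by
        rw [pow_add, pow_two]; simp only [mul_assoc]
      rw [this, a2b_zero, mul_zero]
      exact Submodule.zero_mem _
  -- closure under right multiplication by b
  have hbT : ∀ x ∈ T, x * bGr k ∈ T := by
    intro x hx
    induction hx using Submodule.span_induction with
    | mem y hy =>
      obtain ⟨n, rfl | rfl | rfl⟩ := hy
      · exact hpow_b n
      · have : bGr k * aGr k ^ n * bGr k = 0 := bxb_zero k _
        rw [this]; exact Submodule.zero_mem _
      · have : aGr k * bGr k * aGr k ^ n * bGr k = aGr k * (bGr k * aGr k ^ n * bGr k) := by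
          simp only [mul_assoc]
        rw [this, bxb_zero, mul_zero]; exact Submodule.zero_mem _
    | zero => rw [zero_mul]; exact Submodule.zero_mem _
    | add y z _ _ hy hz => rw [add_mul]; exact Submodule.add_mem _ hy hz
    | smul c y _ hy => rw [smul_mul_assoc]; exact Submodule.smul_mem _ _ hy
  -- every monomial maps into T
  have hmon : ∀ (n : ℕ) (r : Ralg k) (hr : r ∈ stdFil k n), qSt k (monSt k n r hr) ∈ T := by
    intro n
    induction n with
    | zero =>
      intro r hr
      rw [stdFil, pow_zero, Submodule.one_eq_span, Submodule.mem_span_singleton] at hr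
      obtain ⟨c, rfl⟩ := hr
      have h1 : monSt k 0 (c • 1) ((stdFil k 0).smul_mem c (stdFil_one_mem k)) =
          c • (1 : reesAlgebra' (stdFil k) (stdFil_one_mem k) (stdFil_mul k)) := by
        apply Subtype.ext
        show Polynomial.monomial 0 (c • (1 : Ralg k)) = c • (1 : Polynomial (Ralg k))
        rw [Polynomial.monomial_zero_left, ← Polynomial.smul_C, Polynomial.C_1]
      rw [h1, qSt_smul, map_one]
      exact Submodule.smul_mem _ _
        (Submodule.subset_span ⟨0, Or.inl (pow_zero _).symm⟩)
    | succ m ih =>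
      intro r hr
      have hr' : r ∈ Submodule.span k ((({1, αel k, βel k} : Set (Ralg k))) ^ (m + 1)) := by
        rwa [← stdFil_eq_span_pow]
      clear hr'
      have key : ∀ (y : Ralg k),
          y ∈ Submodule.span k ((({1, αel k, βel k} : Set (Ralg k))) ^ (m + 1)) →
          ∀ h : y ∈ stdFil k (m + 1), qSt k (monSt k (m + 1) y h) ∈ T := by
        intro y hy
        induction hy using Submodule.span_induction with
        | mem z hz =>
          intro h
          rw [pow_succ] at hz
          obtain ⟨u, hu, v, hv, rfl⟩ := hz
          have hu' : u ∈ stdFil k m := by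
            rw [stdFil_eq_span_pow]; exact Submodule.subset_span hu
          have hv' : v ∈ stdFil k 1 := by
            rw [stdFil, pow_one]; exact Submodule.subset_span hv
          have hmul : monSt k m u hu' * monSt k 1 v hv' = monSt k (m + 1) (u * v) h := by
            rw [monSt_mul]
          rw [← hmul, map_mul]
          rcases hv with rfl | rfl | rfl
          · have ht : monSt k 1 (1 : Ralg k) hv' =
                reesT (stdFil k) (stdFil_one_mem k) (stdFil_mono k) (stdFil_mul k) := by
              apply Subtype.ext
              show Polynomial.monomial 1 (1 : Ralg k) = Polynomial.X
              exact monomial_one_one_eq_X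
            rw [ht, qSt_t, mul_zero]
            exact Submodule.zero_mem _
          · rw [← aGr_eq]
            exact haT _ (ih u hu')
          · rw [← bGr_eq]
            exact hbT _ (ih u hu')
        | zero =>
          intro h
          have h0 : monSt k (m + 1) 0 h = 0 :=
            Subtype.ext (Polynomial.monomial_zero_right _)
          rw [h0, map_zero]
          exact Submodule.zero_mem _
        | add y z hy hz ihy ihz =>
          intro h
          have hy' : y ∈ stdFil k (m + 1) := by rwa [stdFil_eq_span_pow]
          have hz' : z ∈ stdFil k (m + 1) := by rwa [stdFil_eq_span_pow]
          have hadd : monSt k (m + 1) (y + z) h =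
              monSt k (m + 1) y hy' + monSt k (m + 1) z hz' := by
            apply Subtype.ext
            show Polynomial.monomial (m + 1) (y + z) =
              Polynomial.monomial (m + 1) y + Polynomial.monomial (m + 1) z
            rw [map_add]
          rw [hadd, map_add]
          exact Submodule.add_mem _ (ihy hy') (ihz hz')
        | smul c y hy ihy =>
          intro h
          have hy' : y ∈ stdFil k (m + 1) := by rwa [stdFil_eq_span_pow]
          have hsmul : monSt k (m + 1) (c • y) h = c • monSt k (m + 1) y hy' := by
            apply Subtype.ext
            show Polynomial.monomial (m + 1) (c • y) =
              c • (Polynomial.monomial (m + 1) y : Polynomial (Ralg k))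
            rw [Polynomial.smul_monomial]
          rw [hsmul, qSt_smul]
          exact Submodule.smul_mem _ _ (ihy hy')
      exact key r (by rwa [← stdFil_eq_span_pow]) hr
  -- conclude
  rw [eq_top_iff]
  intro x _
  obtain ⟨p, rfl⟩ := qSt_surj k x
  have hp : (p : Polynomial (Ralg k)) =
      ∑ i ∈ (p : Polynomial (Ralg k)).support,
        Polynomial.monomial i ((p : Polynomial (Ralg k)).coeff i) :=
    (p : Polynomial (Ralg k)).as_sum_support
  have hp' : p = ∑ i ∈ (p : Polynomial (Ralg k)).support,
      monSt k i ((p : Polynomial (Ralg k)).coeff i) (p.2 i) := by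
    apply Subtype.ext
    rw [AddSubmonoidClass.coe_finset_sum]
    exact hp
  rw [hp', map_sum]
  exact Submodule.sum_mem _ fun i _ => hmon i _ _


/-- Example 4.1/Corollary 4.6 computations: the ring `R` generated by `α = diag(x, x²)` and
`β = e₁₂` is exactly `{[[f(x), g(x)], [0, f(x²)]]}`; for the standard filtration
`Γ₀ = k`, `Γ₁ = k + kα + kβ`, `Γₙ = Γ₁ⁿ`, the associated graded ring `gr_Γ R` is spanned
as a `k`-vector space by `{aⁿ, b·aⁿ, a·b·aⁿ : n ≥ 0}` where `a, b` are the images of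
`α, β`; in particular `gr_Γ R` is a finitely generated right module over `k[a]`, and
hence is right noetherian. -/
theorem grStd_spanned_fg_right_noetherian :
    ((Ralg k : Set (Matrix (Fin 2) (Fin 2) (Polynomial k))) =
      {M | ∃ f g : Polynomial k, M = !![f, g; 0, f.comp (Polynomial.X ^ 2)]}) ∧
    Submodule.span k {x : grStd k | ∃ n : ℕ,
        x = aGr k ^ n ∨ x = bGr k * aGr k ^ n ∨ x = aGr k * bGr k * aGr k ^ n} = ⊤ ∧
    (∃ (m : ℕ) (g : Fin m → grStd k), ∀ x : grStd k,
      ∃ c : Fin m → Polynomial k, x = ∑ i, g i * Polynomial.aeval (aGr k) (c i)) ∧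
    IsNoetherianRing (grStd k)ᵐᵒᵖ := by
  have h3 : ∀ x : grStd k, ∃ c : Fin 3 → Polynomial k,
      x = ∑ i, ![1, bGr k, aGr k * bGr k] i * Polynomial.aeval (aGr k) (c i) := by
    intro x
    have hx : x ∈ Submodule.span k {x : grStd k | ∃ n : ℕ,
        x = aGr k ^ n ∨ x = bGr k * aGr k ^ n ∨ x = aGr k * bGr k * aGr k ^ n} := by
      rw [span_words]; trivial
    induction hx using Submodule.span_induction with
    | mem y hy =>
      obtain ⟨n, rfl | rfl | rfl⟩ := hy
      · exact ⟨![Polynomial.X ^ n, 0, 0], by simp [Fin.sum_univ_three]⟩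
      · exact ⟨![0, Polynomial.X ^ n, 0], by simp [Fin.sum_univ_three]⟩
      · exact ⟨![0, 0, Polynomial.X ^ n], by simp [Fin.sum_univ_three]⟩
    | zero => exact ⟨0, by simp⟩
    | add y z _ _ ihy ihz =>
      obtain ⟨c1, rfl⟩ := ihy
      obtain ⟨c2, rfl⟩ := ihz
      refine ⟨c1 + c2, ?_⟩
      rw [← Finset.sum_add_distrib]
      refine Finset.sum_congr rfl fun i _ => ?_
      simp [map_add, mul_add]
    | smul r y _ ihy =>
      obtain ⟨c, rfl⟩ := ihy
      refine ⟨r • c, ?_⟩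
      rw [Finset.smul_sum]
      refine Finset.sum_congr rfl fun i _ => ?_
      simp only [Pi.smul_apply, map_smul, mul_smul_comm]
  refine ⟨Ralg_coe k, span_words k, ⟨3, ![1, bGr k, aGr k * bGr k], h3⟩, ?_⟩
  -- right noetherian: grStdᵒᵖ is a finite module over k[X] acting through a ↦ op a
  let φ : Polynomial k →+* (grStd k)ᵐᵒᵖ :=
    { toFun := fun p => MulOpposite.op (Polynomial.aeval (aGr k) p)
      map_one' := by simp
      map_mul' := fun p q => by
        show MulOpposite.op (Polynomial.aeval (aGr k) (p * q)) =
          MulOpposite.op (Polynomial.aeval (aGr k) p) *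
            MulOpposite.op (Polynomial.aeval (aGr k) q)
        rw [mul_comm p q, map_mul, MulOpposite.op_mul]
      map_zero' := by simp
      map_add' := fun p q => by simp }
  letI : Module (Polynomial k) (grStd k)ᵐᵒᵖ := Module.compHom _ φ
  haveI : IsScalarTower (Polynomial k) (grStd k)ᵐᵒᵖ (grStd k)ᵐᵒᵖ :=
    ⟨fun p x y => mul_assoc (φ p) x y⟩
  haveI : Module.Finite (Polynomial k) (grStd k)ᵐᵒᵖ := by
    constructor
    rw [Submodule.fg_def]
    refine ⟨Set.range (fun i : Fin 3 => MulOpposite.op (![1, bGr k, aGr k * bGr k] i)),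
      Set.finite_range _, ?_⟩
    rw [eq_top_iff]
    intro x _
    obtain ⟨c, hc⟩ := h3 x.unop
    have hsum : ∀ (f : Fin 3 → grStd k),
        MulOpposite.op (∑ i, f i) = ∑ i, MulOpposite.op (f i) := fun f =>
      map_sum (MulOpposite.opAddEquiv : grStd k ≃+ (grStd k)ᵐᵒᵖ) f Finset.univ
    have hx : x = ∑ i, c i • MulOpposite.op (![1, bGr k, aGr k * bGr k] i) := by
      have hxo : x = MulOpposite.op x.unop := rfl
      rw [hxo, hc, hsum]
      refine Finset.sum_congr rfl fun i _ => ?_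
      exact MulOpposite.op_mul _ _
    rw [hx]
    exact Submodule.sum_mem _ fun i _ => Submodule.smul_mem _ _
      (Submodule.subset_span (Set.mem_range_self i))
  haveI := isNoetherian_of_isNoetherianRing_of_finite (Polynomial k) (grStd k)ᵐᵒᵖ
  exact isNoetherianRing_iff.mpr (isNoetherian_of_tower (Polynomial k) this)

end Example16
end

section
/- Let T = {[[f(x), g(x), h(x)],[0, f(x²), l(x)],[0,0,f(x)]] : f,g,h,l ∈ k[x]} + y·M₃(k[x,y]) ⊆ M₃(k[x,y]). Then T is isomorphic to its opposite ring T^op, via the map sending a matrix m to its transpose about the antidiagonal (i.e., (m^op)_{ij} = m_{4-j,4-i}). -/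
open Polynomial

/-- Let `T = {[[f(x), g(x), h(x)], [0, f(x²), l(x)], [0, 0, f(x)]]} + y·M₃(k[x,y])`.
Then `T` is isomorphic to its opposite ring `T^op` via the map sending a matrix to its
transpose about the antidiagonal, `(τ m)ᵢⱼ = m_{4-j,4-i}`: this map is an additive
bijection of `M₃(k[x,y])` with `τ 1 = 1` and `τ (m·n) = τ n · τ m`, which preserves `T`. -/
theorem T_antitranspose_iso_op (k : Type*) [Field k] :
    let Q := MvPolynomial (Fin 2) k
    let ι : Polynomial k → Q := fun f => Polynomial.aeval (MvPolynomial.X 0 : Q) f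
    let Tset : Set (Matrix (Fin 3) (Fin 3) Q) :=
      {M | ∃ f g h l : Polynomial k, ∃ Y : Matrix (Fin 3) (Fin 3) Q,
        M = !![ι f, ι g, ι h;
               0, ι (f.comp (Polynomial.X ^ 2)), ι l;
               0, 0, ι f] + (MvPolynomial.X 1 : Q) • Y}
    let τ : Matrix (Fin 3) (Fin 3) Q → Matrix (Fin 3) (Fin 3) Q :=
      fun m => Matrix.of fun i j => m (Fin.rev j) (Fin.rev i)
    Function.Bijective τ ∧
    (∀ m n : Matrix (Fin 3) (Fin 3) Q, τ (m + n) = τ m + τ n) ∧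
    τ 1 = 1 ∧
    (∀ m n : Matrix (Fin 3) (Fin 3) Q, τ (m * n) = τ n * τ m) ∧
    (∀ m : Matrix (Fin 3) (Fin 3) Q, m ∈ Tset ↔ τ m ∈ Tset) := by
  intro Q ι Tset τ
  have hinv : ∀ m, τ (τ m) = m := by
    intro m; ext i j; simp [τ, Fin.rev_rev]
  have hadd : ∀ m n, τ (m + n) = τ m + τ n := by
    intro m n; ext i j; simp [τ, Matrix.add_apply]
  have hone : τ 1 = 1 := by
    ext i j
    simp [τ, Matrix.one_apply, Fin.rev_inj, eq_comm]
  have hmul : ∀ m n, τ (m * n) = τ n * τ m := by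
    intro m n; ext i j
    simp only [τ, Matrix.of_apply, Matrix.mul_apply]
    rw [← Equiv.sum_comp (Fin.revPerm)]
    simp [mul_comm]
  have hsmul : ∀ (c : Q) (m), τ (c • m) = c • τ m := by
    intro c m; ext i j; simp [τ]
  have hmem : ∀ m, m ∈ Tset → τ m ∈ Tset := by
    rintro m ⟨f, g, h, l, Y, rfl⟩
    refine ⟨f, l, h, g, τ Y, ?_⟩
    rw [hadd, hsmul]
    congr 1
    ext i j
    fin_cases i <;> fin_cases j <;> simp [τ, Fin.rev]
  refine ⟨⟨Function.LeftInverse.injective hinv, Function.RightInverse.surjective hinv⟩,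
    hadd, hone, hmul, fun m => ⟨hmem m, fun hm => ?_⟩⟩
  have := hmem _ hm
  rwa [hinv] at this
end
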